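/- The kernel K(x,y) is nonnegative: for all x, y in [0,1], K(x,y) ≥ 0. -/
import Mathlib

noncomputable def K5 (x y : ℝ) : ℝ :=
  if y ≤ x then (1 / 120) * y ^ 2 * (y ^ 3 - 5 * x * y ^ 2 + 10 * x ^ 2 * (3 + y))
  else (1 / 120) * x ^ 2 * (x ^ 3 - 5 * y * x ^ 2 + 10 * y ^ 2 * (3 + x))

lemma aux5 {x y : ℝ} (hy : 0 ≤ y) (hyx : y ≤ x) :
    0 ≤ (1 / 120) * y ^ 2 * (y ^ 3 - 5 * x * y ^ 2 + 10 * x ^ 2 * (3 + y)) := by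
  nlinarith [sq_nonneg x, sq_nonneg y, mul_nonneg hy hy, sq_nonneg (x*y),
    mul_nonneg (mul_nonneg hy hy) hy, sq_nonneg (x - y), mul_nonneg (mul_nonneg hy hy) (sub_nonneg.2 hyx)]

theorem stmt_5 :
    ∀ x ∈ Set.Icc (0 : ℝ) 1, ∀ y ∈ Set.Icc (0 : ℝ) 1, 0 ≤ K5 x y := by
  intro x hx y hy
  unfold K5
  split_ifs with h
  · exact aux5 hy.1 h
  · exact aux5 hx.1 (le_of_not_ge h)
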